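/- arXiv:1212.2154 — 2 statements merged into one kernel-verified Lean document; each statement's English description precedes it below -/
import Mathlib

section
/- Let l be a complete lattice, TS an mv-TS over AP without terminal states, P a safety property over AP, and A an l-VDFA over the alphabet Set AP such that L(A)(θ) = GPref(P)(θ) for every finite word θ. Then the following are equivalent: (1) TS ⊨ P; (2) Traces_fin(TS)(θ) ≤ L(A)(θ) for every finite word θ, where Traces_fin(TS)(θ) = ⨆_{τ : ℕ → Set AP} Traces(TS)(θ·τ); (3) TS ⊗ A ⊨ inv(φ), where φ : Set Q → l is given by φ(B) = ⨆_{q ∈ B} F(q) and inv(φ)(σ') = ⨅_{i : ℕ} φ(σ' i) for infinite words σ' : ℕ → Set Q. -/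
/-- The infinite word obtained by prepending the finite word `θ` to the
infinite word `τ`. -/
def prependWord {AP : Type*} (θ : List (Set AP)) (τ : ℕ → Set AP) : ℕ → Set AP :=
  fun n => if h : n < θ.length then θ.get ⟨n, h⟩ else τ (n - θ.length)

/-- The finite prefix `σ|n = (σ 0, …, σ (n-1))` of an infinite word `σ`. -/
def prefixWord {AP : Type*} (σ : ℕ → Set AP) (n : ℕ) : List (Set AP) :=
  List.ofFn (fun i : Fin n => σ i)

/-- The good-prefix function of `P`: `GPref(P)(θ) = ⨆ τ, P(θ·τ)`. -/
def mvGPref {AP l : Type*} [CompleteLattice l] (P : (ℕ → Set AP) → l)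
    (θ : List (Set AP)) : l :=
  ⨆ τ : ℕ → Set AP, P (prependWord θ τ)

/-- `P` is a safety property if `⨅ n, GPref(P)(σ|n) ≤ P(σ)` for every `σ`. -/
def mvIsSafety {AP l : Type*} [CompleteLattice l] (P : (ℕ → Set AP) → l) : Prop :=
  ∀ σ : ℕ → Set AP, (⨅ n : ℕ, mvGPref P (prefixWord σ n)) ≤ P σ

/-- The trace function of the mv-transition system `(S, Act, η, I, L)`. -/
def mvTraces {AP l S Act : Type*} [CompleteLattice l]
    (η : S → Act → S → l) (I : S → l) (L : S → Set AP) (σ : ℕ → Set AP) : l :=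
  ⨆ π : {p : ℕ → S // ∀ i : ℕ, L (p i) = σ i}, ⨆ α : ℕ → Act,
    I (π.1 0) ⊓ ⨅ i : ℕ, η (π.1 i) (α i) (π.1 (i + 1))

open Classical in
/-- Transition valuation of the product `TS ⊗ A` of an mv-TS with a
deterministic automaton. -/
noncomputable def prodEta {AP l S Act Q : Type*} [CompleteLattice l]
    (η : S → Act → S → l) (L : S → Set AP) (δ : Q → Set AP → Q) :
    S × Q → Act → S × Q → l :=
  fun sq a tp => if tp.2 = δ sq.2 (L tp.1) then η sq.1 a tp.1 else ⊥

open Classical in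
/-- Initial valuation of the product `TS ⊗ A`. -/
noncomputable def prodInit {AP l S Q : Type*} [CompleteLattice l]
    (I : S → l) (L : S → Set AP) (δ : Q → Set AP → Q) (q0 : Q) : S × Q → l :=
  fun sq => if sq.2 = δ q0 (L sq.1) then I sq.1 else ⊥

lemma prependWord_nil {AP : Type*} (τ : ℕ → Set AP) : prependWord [] τ = τ := by
  funext n; simp [prependWord]

lemma prepend_prefix {AP : Type*} (σ : ℕ → Set AP) (n : ℕ) :
    prependWord (prefixWord σ n) (fun k => σ (n + k)) = σ := by
  funext m
  simp only [prependWord, prefixWord, List.length_ofFn]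
  split
  next h => simp [List.get_ofFn]
  next h =>
    have hm : n + (m - n) = m := by omega
    exact congrArg σ hm

lemma prefixWord_zero {AP : Type*} (σ : ℕ → Set AP) : prefixWord σ 0 = [] := rfl

lemma prefixWord_succ {AP : Type*} (σ : ℕ → Set AP) (n : ℕ) :
    prefixWord σ (n + 1) = prefixWord σ n ++ [σ n] := by
  show List.ofFn (fun i : Fin (n+1) => σ i) = _
  rw [List.ofFn_succ']
  simp [prefixWord, Fin.last, List.concat_eq_append]

lemma foldl_prefix_succ {AP Q : Type*} (δ : Q → Set AP → Q) (q0 : Q)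
    (σ : ℕ → Set AP) (n : ℕ) :
    (prefixWord σ (n + 1)).foldl δ q0 = δ ((prefixWord σ n).foldl δ q0) (σ n) := by
  rw [prefixWord_succ, List.foldl_append]; rfl

lemma mvGPref_le_nil {AP l : Type*} [CompleteLattice l] (P : (ℕ → Set AP) → l)
    (θ : List (Set AP)) : mvGPref P θ ≤ mvGPref P [] :=
  iSup_le fun τ => le_iSup_of_le (prependWord θ τ) (by rw [prependWord_nil])

/-- Verification of mv-regular safety properties: for a safety property `P`
whose good prefixes are recognized by an `l`-VDFA `A = (Q, δ, q0, F)`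
(i.e. `L(A)(θ) = F(δ*(q0, θ)) = GPref(P)(θ)`), and an mv-TS
`TS = (S, Act, η, I, L)` without terminal states, the following are
equivalent: (1) `TS ⊨ P`; (2) `Traces_fin(TS) ⊆ L(A)`;
(3) `TS ⊗ A ⊨ inv(φ)` with `φ(B) = ⨆ q ∈ B, F q`. -/
theorem stmt12 {AP l S Act Q : Type*} [CompleteLattice l]
    (η : S → Act → S → l) (I : S → l) (L : S → Set AP)
    (hter : ∀ s : S, ∃ (a : Act) (t : S), η s a t ≠ ⊥)
    (P : (ℕ → Set AP) → l) (hP : mvIsSafety P)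
    (δ : Q → Set AP → Q) (q0 : Q) (F : Q → l)
    (hA : ∀ θ : List (Set AP), F (θ.foldl δ q0) = mvGPref P θ) :
    List.TFAE
      [∀ σ : ℕ → Set AP, mvTraces η I L σ ≤ P σ,
       ∀ θ : List (Set AP),
         (⨆ τ : ℕ → Set AP, mvTraces η I L (prependWord θ τ)) ≤ F (θ.foldl δ q0),
       ∀ σ' : ℕ → Set Q,
         mvTraces (prodEta η L δ) (prodInit I L δ q0)
             (fun sq : S × Q => ({sq.2} : Set Q)) σ' ≤
           ⨅ i : ℕ, ⨆ q ∈ σ' i, F q] := by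
  tfae_have 1 → 2 := by
    intro h1 θ
    refine iSup_le fun τ => (h1 _).trans ?_
    rw [hA]
    exact le_iSup (fun τ => P (prependWord θ τ)) τ
  tfae_have 2 → 1 := by
    intro h2 σ
    refine le_trans (le_iInf fun n => ?_) (hP σ)
    have h := h2 (prefixWord σ n)
    rw [hA] at h
    refine le_trans ?_ h
    refine le_iSup_of_le (fun k => σ (n + k)) ?_
    rw [prepend_prefix]
  tfae_have 2 → 3 := by
    intro h2 σ'
    refine iSup_le fun π' => iSup_le fun α => ?_
    set s : ℕ → S := fun i => (π'.1 i).1 with hs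
    set q : ℕ → Q := fun i => (π'.1 i).2 with hqdef
    by_cases hinit : q 0 = δ q0 (L (s 0))
    · by_cases hstep : ∀ i, q (i + 1) = δ (q i) (L (s (i + 1)))
      · have hq : ∀ n, q n = (prefixWord (fun i => L (s i)) (n + 1)).foldl δ q0 := by
          intro n
          induction n with
          | zero =>
            rw [foldl_prefix_succ]
            simpa [prefixWord_zero] using hinit
          | succ n ih =>
            rw [foldl_prefix_succ, ← ih]
            exact hstep n
        have hval : prodInit I L δ q0 (π'.1 0) ⊓
            (⨅ i : ℕ, prodEta η L δ (π'.1 i) (α i) (π'.1 (i + 1))) =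
            I (s 0) ⊓ ⨅ i : ℕ, η (s i) (α i) (s (i + 1)) := by
          congr 1
          · simp only [prodInit]; rw [if_pos hinit]
          · refine iInf_congr fun i => ?_
            simp only [prodEta]; rw [if_pos (hstep i)]
        rw [hval]
        refine le_iInf fun n => ?_
        have hσ' : σ' n = ({q n} : Set Q) := (π'.2 n).symm
        rw [hσ']
        have hsing : (⨆ p ∈ ({q n} : Set Q), F p) = F (q n) := by simp
        rw [hsing, hq n]
        refine le_trans ?_ (h2 (prefixWord (fun i => L (s i)) (n + 1)))
        have hpp : prependWord (prefixWord (fun i => L (s i)) (n + 1))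
            (fun k => L (s (n + 1 + k))) = fun i => L (s i) := by
          simpa using prepend_prefix (fun i => L (s i)) (n + 1)
        refine le_iSup_of_le (fun k => L (s (n + 1 + k))) ?_
        rw [hpp]
        exact le_iSup_of_le ⟨s, fun i => rfl⟩
          (le_iSup (fun β : ℕ → Act => I (s 0) ⊓ ⨅ i, η (s i) (β i) (s (i + 1))) α)
      · obtain ⟨i, hi⟩ := not_forall.mp hstep
        have hbot : prodEta η L δ (π'.1 i) (α i) (π'.1 (i + 1)) = ⊥ := by
          simp only [prodEta]; rw [if_neg hi]
        exact le_trans (le_trans inf_le_right (iInf_le _ i)) (hbot ▸ bot_le)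
    · have hbot : prodInit I L δ q0 (π'.1 0) = ⊥ := by
        simp only [prodInit]; rw [if_neg hinit]
      exact le_trans inf_le_left (hbot ▸ bot_le)
  tfae_have 3 → 1 := by
    intro h3 σ
    refine iSup_le fun π => iSup_le fun α => ?_
    set q : ℕ → Q := fun n => (prefixWord σ (n + 1)).foldl δ q0 with hqdef
    have key : I (π.1 0) ⊓ (⨅ i : ℕ, η (π.1 i) (α i) (π.1 (i + 1))) ≤
        mvTraces (prodEta η L δ) (prodInit I L δ q0)
          (fun sq : S × Q => ({sq.2} : Set Q)) (fun i => ({q i} : Set Q)) := by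
      refine le_trans (le_of_eq ?_)
        (le_iSup_of_le ⟨fun i => (π.1 i, q i), fun i => rfl⟩ (le_iSup _ α))
      congr 1
      · simp only [prodInit]
        rw [if_pos]
        rw [π.2 0]
        show (prefixWord σ (0 + 1)).foldl δ q0 = δ q0 (σ 0)
        rw [foldl_prefix_succ]
        rfl
      · refine iInf_congr fun i => ?_
        simp only [prodEta]
        rw [if_pos]
        rw [π.2 (i + 1)]
        show (prefixWord σ (i + 1 + 1)).foldl δ q0 =
          δ ((prefixWord σ (i + 1)).foldl δ q0) (σ (i + 1))
        rw [foldl_prefix_succ]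
    refine le_trans (le_trans key (h3 _)) (le_trans (le_iInf fun n => ?_) (hP σ))
    match n with
    | 0 =>
      refine le_trans (iInf_le _ 0) ?_
      have hsing : (⨆ p ∈ ({q 0} : Set Q), F p) = F (q 0) := by simp
      rw [hsing]
      show F ((prefixWord σ (0 + 1)).foldl δ q0) ≤ _
      rw [hA, prefixWord_zero]
      exact mvGPref_le_nil P _
    | Nat.succ m =>
      refine le_trans (iInf_le _ m) ?_
      have hsing : (⨆ p ∈ ({q m} : Set Q), F p) = F (q m) := by simp
      rw [hsing]
      show F ((prefixWord σ (m + 1)).foldl δ q0) ≤ _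
      rw [hA]
  tfae_finish
end

section
/- Let l be a finite distributive lattice (with its induced complete-lattice structure), Σ a finite alphabet (a finite type), A = (Q, δ, I, F) an l-VBA over Σ, and m ∈ l a sup-irreducible element. Then the m-cut of the ω-language of A equals the language of the classical Büchi automaton A_m: {w : ℕ → Σ | m ≤ L_ω(A)(w)} is exactly the set of words accepted by the Büchi automaton with state set Q, transition relation Δ_m = {(p, a, q) | m ≤ δ p a q}, initial set {q | m ≤ I q} and accepting set {q | m ≤ F q}. -/
/-- The ω-language of an `l`-valued Büchi automaton `(Q, δ, I, F)`. -/
def vbaLang {l Q A : Type*} [CompleteLattice l]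
    (δ : Q → A → Q → l) (I : Q → l) (F : Q → l) (w : ℕ → A) : l :=
  ⨆ q : ℕ → Q, ⨆ J : {J : Set ℕ // J.Infinite},
    I (q 0) ⊓ (⨅ i : ℕ, δ (q i) (w i) (q (i + 1))) ⊓ ⨅ j ∈ J.1, F (q j)

/-- A classical nondeterministic Büchi automaton `(Δ, Q0, Acc)` accepts the
infinite word `w`. -/
def buchiAccepts {Q A : Type*} (Δ : Set (Q × A × Q)) (Q0 Acc : Set Q)
    (w : ℕ → A) : Prop :=
  ∃ q : ℕ → Q, q 0 ∈ Q0 ∧ (∀ i : ℕ, (q i, w i, q (i + 1)) ∈ Δ) ∧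
    {j : ℕ | q j ∈ Acc}.Infinite

/-! In a distributive lattice a sup-irreducible `m` is sup-prime, so `m` lies below a finite
join only if it lies below one of the joinands. Since `l` is finite, the supremum defining
`L_ω(A)(w)` takes only finitely many values, so `m ≤ L_ω(A)(w)` yields a single run `q` and an
infinite `J` with `m` below the corresponding meet, i.e. below `I (q 0)`, every transition weight
and `F (q j)` for `j ∈ J`: exactly an accepting run of `A_m`. -/

theorem SupIrred.supPrime_of_distrib {l : Type*} [Lattice l]
    (hd : ∀ x y z : l, x ⊓ (y ⊔ z) = (x ⊓ y) ⊔ (x ⊓ z)) {m : l} (hm : SupIrred m) :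
    SupPrime m :=
  letI := DistribLattice.ofInfSupLe fun x y z => (hd x y z).le
  supPrime_iff_supIrred.2 hm

section SupPrime

variable {l : Type*} [CompleteLattice l] {m : l}

theorem SupPrime.le_sSup_iff_of_finite (hm : SupPrime m) {s : Set l} (hs : s.Finite) :
    m ≤ sSup s ↔ ∃ a ∈ s, m ≤ a := by
  rw [← hs.coe_toFinset, ← Finset.sup_id_eq_sSup, hm.le_finset_sup]
  simp

theorem SupPrime.le_iSup_iff [Finite l] (hm : SupPrime m) {ι : Sort*} {f : ι → l} :
    m ≤ ⨆ i, f i ↔ ∃ i, m ≤ f i := by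
  rw [← sSup_range, hm.le_sSup_iff_of_finite (Set.toFinite _)]
  simp

end SupPrime

theorem le_vbaLang_iff_buchiAccepts {l Q A : Type*} [CompleteLattice l] [Finite l]
    (δ : Q → A → Q → l) (I F : Q → l) {m : l} (hm : SupPrime m) (w : ℕ → A) :
    m ≤ vbaLang δ I F w ↔ buchiAccepts {t : Q × A × Q | m ≤ δ t.1 t.2.1 t.2.2}
        {q : Q | m ≤ I q} {q : Q | m ≤ F q} w := by
  simp only [vbaLang, hm.le_iSup_iff, le_inf_iff, le_iInf_iff, buchiAccepts]
  refine exists_congr fun q => ?_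
  constructor
  · rintro ⟨J, ⟨h0, hδ⟩, hF⟩
    exact ⟨h0, hδ, J.2.mono hF⟩
  · rintro ⟨h0, hδ, hF⟩
    exact ⟨⟨_, hF⟩, ⟨h0, hδ⟩, fun _ => id⟩

theorem stmt19_general {l : Type*} [CompleteLattice l] [Fintype l]
    (hd : ∀ x y z : l, x ⊓ (y ⊔ z) = (x ⊓ y) ⊔ (x ⊓ z))
    {A Q : Type*}
    (δ : Q → A → Q → l) (I F : Q → l) {m : l} (hm : SupIrred m) :
    {w : ℕ → A | m ≤ vbaLang δ I F w} =
      {w : ℕ → A | buchiAccepts {t : Q × A × Q | m ≤ δ t.1 t.2.1 t.2.2}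
        {q : Q | m ≤ I q} {q : Q | m ≤ F q} w} :=
  Set.ext (le_vbaLang_iff_buchiAccepts δ I F (hm.supPrime_of_distrib hd))

/-- Over a finite distributive (complete) lattice, for a sup-irreducible `m`,
the `m`-cut of the ω-language of an `l`-VBA `A = (Q, δ, I, F)` is exactly the
language of the classical Büchi automaton `A_m` obtained by taking the
`m`-cuts of `δ`, `I` and `F`. -/
theorem stmt19 {l : Type*} [CompleteLattice l] [Fintype l]
    (hd : ∀ x y z : l, x ⊓ (y ⊔ z) = (x ⊓ y) ⊔ (x ⊓ z))
    {A Q : Type*} [Fintype A] [Fintype Q]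
    (δ : Q → A → Q → l) (I F : Q → l) {m : l} (hm : SupIrred m) :
    {w : ℕ → A | m ≤ vbaLang δ I F w} =
      {w : ℕ → A | buchiAccepts {t : Q × A × Q | m ≤ δ t.1 t.2.1 t.2.2}
        {q : Q | m ≤ I q} {q : Q | m ≤ F q} w} :=
  stmt19_general hd δ I F hm
end
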